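/- Let ν > 0 and λ ≥ 0 be Lamé coefficients, η > 0, T > 0, and let U : ℝ³ → ℝ³ be a C¹ vector field. Suppose p : (0,T) × ℝ³ → ℝ and u : (0,T) × ℝ³ → ℝ³ are C¹ in (t,x) with second spatial derivatives of u existing and jointly continuous, and suppose there is a compact set K ⊂ ℝ³ such that for every t the functions p(t,·) and u(t,·) are supported in K. Assume that on (0,T) × ℝ³: ∂_t p + U·∇p + div u = 0 and ∂_t u + U·∇u − div σ(u) + ηu + ∇p = 0. Then the function E(t) := ½∫_{ℝ³}(p(t,x)² + |u(t,x)|²) dx is differentiable on (0,T) and satisfies E′(t) = −∫_{ℝ³} σ(u(t)) : ε(u(t)) dx − η∫_{ℝ³} |u(t)|² dx + ½∫_{ℝ³} (div U)(x)·(p(t,x)² + |u(t,x)|²) dx for all t ∈ (0,T). -/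

import Mathlib

/-!
Differentiating under the integral sign (the integrand is `C¹` in `(t, x)` and supported in a
fixed compact set, so its time derivative is dominated by a constant on that set) gives
`E'(t) = ∫ p ∂ₜp + u · ∂ₜu`. Substituting the equations, this integrand equals
`-σ(u) : ε(u) - η|u|² + ½ (div U)(p² + |u|²)` minus the divergence of the energy flux
`F_j = ½ U_j (p² + |u|²) + p u_j - ∑ᵢ uᵢ σᵢⱼ(u)`; here the symmetry of `σ` turns `σ : ∇u` into
`σ : ε`. The divergence of a compactly supported `C¹` field integrates to zero.
-/

open MeasureTheory

noncomputable section

/-- Partial derivative in the `i`-th coordinate direction on `ℝ³`. -/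
def pd {F : Type*} [NormedAddCommGroup F] [NormedSpace ℝ F]
    (f : EuclideanSpace ℝ (Fin 3) → F) (i : Fin 3) (x : EuclideanSpace ℝ (Fin 3)) : F :=
  fderiv ℝ f x (EuclideanSpace.single i 1)

/-- Divergence of a vector field on `ℝ³`. -/
def divg (v : EuclideanSpace ℝ (Fin 3) → EuclideanSpace ℝ (Fin 3))
    (x : EuclideanSpace ℝ (Fin 3)) : ℝ :=
  ∑ i, pd (fun y => v y i) i x

/-- Strain tensor `ε_{ij}(μ) = ½(∂μ_j/∂x_i + ∂μ_i/∂x_j)`. -/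
def strain (μ : EuclideanSpace ℝ (Fin 3) → EuclideanSpace ℝ (Fin 3))
    (i j : Fin 3) (x : EuclideanSpace ℝ (Fin 3)) : ℝ :=
  (pd (fun y => μ y j) i x + pd (fun y => μ y i) j x) / 2

/-- Stress tensor `σ(μ) = 2ν ε(μ) + λ (tr ε(μ)) I₃`. -/
def stress (ν lam : ℝ) (μ : EuclideanSpace ℝ (Fin 3) → EuclideanSpace ℝ (Fin 3))
    (i j : Fin 3) (x : EuclideanSpace ℝ (Fin 3)) : ℝ :=
  2 * ν * strain μ i j x + (if i = j then lam * (∑ k, strain μ k k x) else 0)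

/-- `i`-th component of the divergence of the stress tensor. -/
def divStress (ν lam : ℝ) (μ : EuclideanSpace ℝ (Fin 3) → EuclideanSpace ℝ (Fin 3))
    (i : Fin 3) (x : EuclideanSpace ℝ (Fin 3)) : ℝ :=
  ∑ j, pd (stress ν lam μ i j) j x

open Set

section General

variable {E : Type*} [NormedAddCommGroup E] [NormedSpace ℝ E]

theorem ContDiffOn.contDiff_slice {F : Type*} [NormedAddCommGroup F] [NormedSpace ℝ F]
    {n : WithTop ℕ∞} {f : ℝ → E → F} {S : Set ℝ} (hS : IsOpen S)
    (hf : ContDiffOn ℝ n (fun q : ℝ × E => f q.1 q.2) (S ×ˢ univ)) {s : ℝ} (hs : s ∈ S) :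
    ContDiff ℝ n (f s) :=
  contDiff_iff_contDiffAt.2 fun x =>
    (hf.contDiffAt ((hS.prod isOpen_univ).mem_nhds ⟨hs, trivial⟩)).comp x
      (contDiff_const.prodMk contDiff_id).contDiffAt

theorem ContDiffOn.hasDerivAt_slice {F : Type*} [NormedAddCommGroup F] [NormedSpace ℝ F]
    {n : WithTop ℕ∞} {f : ℝ → E → F} {S : Set ℝ} (hS : IsOpen S)
    (hf : ContDiffOn ℝ n (fun q : ℝ × E => f q.1 q.2) (S ×ˢ univ)) (hn : n ≠ 0)
    {s : ℝ} (hs : s ∈ S) (x : E) :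
    HasDerivAt (fun r => f r x) (fderiv ℝ (fun q : ℝ × E => f q.1 q.2) (s, x) (1, 0)) s :=
  ((hf.differentiableOn hn).differentiableAt ((hS.prod isOpen_univ).mem_nhds ⟨hs, trivial⟩)
    ).hasFDerivAt.comp_hasDerivAt s ((hasDerivAt_id s).prodMk (hasDerivAt_const s x))

theorem hasDerivAt_integral_of_contDiffOn [MeasurableSpace E] [OpensMeasurableSpace E]
    {μ : Measure E} [IsFiniteMeasureOnCompacts μ] {F : ℝ → E → ℝ} {S : Set ℝ} (hS : IsOpen S)
    (hF : ContDiffOn ℝ 1 (fun q : ℝ × E => F q.1 q.2) (S ×ˢ univ))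
    {K : Set E} (hK : IsCompact K) (hFK : ∀ s ∈ S, ∀ x ∉ K, F s x = 0) {t : ℝ} (ht : t ∈ S) :
    HasDerivAt (fun s => ∫ x, F s x ∂μ) (∫ x, deriv (fun s => F s x) t ∂μ) t := by
  set D : ℝ × E → ℝ := fun q => fderiv ℝ (fun q : ℝ × E => F q.1 q.2) q (1, 0)
  have hD : ContinuousOn D (S ×ˢ univ) :=
    (hF.continuousOn_fderiv_of_isOpen (hS.prod isOpen_univ) le_rfl).clm_apply continuousOn_const
  have hderiv : ∀ s ∈ S, ∀ x, HasDerivAt (fun r => F r x) (D (s, x)) s :=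
    fun s hs x => hF.hasDerivAt_slice hS one_ne_zero hs x
  have hDK : ∀ s ∈ S, ∀ x ∉ K, D (s, x) = 0 := fun s hs x hx =>
    (hderiv s hs x).unique <| (hasDerivAt_const s 0).congr_of_eventuallyEq <|
      Filter.mem_of_superset (hS.mem_nhds hs) fun r hr => hFK r hr x hx
  have hcont : ∀ s ∈ S, Continuous (F s) := fun s hs =>
    (hF.contDiff_slice hS hs).continuous
  obtain ⟨δ, hδ, hδS⟩ := Metric.nhds_basis_closedBall.mem_iff.1 (hS.mem_nhds ht)
  obtain ⟨C, hC⟩ := ((isCompact_closedBall t δ).prod hK).exists_bound_of_continuousOn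
    (hD.mono (prod_mono hδS (subset_univ K)))
  have key := hasDerivAt_integral_of_dominated_loc_of_deriv_le (μ := μ)
    (F' := fun s x => D (s, x)) (bound := K.indicator fun _ => C) (Metric.closedBall_mem_nhds t hδ)
    (Filter.eventually_of_mem (hS.mem_nhds ht) fun s hs => (hcont s hs).aestronglyMeasurable)
    ((hcont t ht).integrable_of_hasCompactSupport (.intro hK (hFK t ht)))
    (hD.comp_continuous (continuous_const.prodMk continuous_id)
      fun x => ⟨ht, trivial⟩).aestronglyMeasurable
    (.of_forall fun x s hs => by
      by_cases hx : x ∈ K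
      · simpa [hx] using hC (s, x) ⟨hs, hx⟩
      · simp [hx, hDK s (hδS hs) x hx])
    ((integrable_indicator_iff hK.measurableSet).2 (integrableOn_const hK.measure_lt_top.ne))
    (.of_forall fun x s hs => hderiv s (hδS hs) x)
  simpa only [(hderiv t ht _).deriv] using key.2

theorem HasCompactSupport.integral_fderiv_apply_eq_zero [FiniteDimensional ℝ E]
    [MeasurableSpace E] [BorelSpace E] {μ : Measure E} [μ.IsAddHaarMeasure]
    {F : Type*} [NormedAddCommGroup F] [NormedSpace ℝ F]
    {g : E → F} (hg : ContDiff ℝ 1 g) (hsupp : HasCompactSupport g) (v : E) :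
    ∫ x, fderiv ℝ g x v ∂μ = 0 := by
  have hg' : Integrable (fun x => fderiv ℝ g x v) μ :=
    ((hg.continuous_fderiv one_ne_zero).clm_apply continuous_const).integrable_of_hasCompactSupport
      (hsupp.fderiv_apply (𝕜 := ℝ) v)
  simpa using integral_smul_fderiv_eq_neg_fderiv_smul_of_integrable (μ := μ)
    (f := fun _ => (1 : ℝ)) (g := g) (v := v) (by simp) (by simpa using hg')
    (by simpa using hg.continuous.integrable_of_hasCompactSupport hsupp)
    (fun _ _ => differentiableAt_const _) (fun x _ => hg.differentiable one_ne_zero x)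

end General

local notation "ℝ³" => EuclideanSpace ℝ (Fin 3)

section PartialDerivatives

variable {f g : ℝ³ → ℝ} {x : ℝ³} (i : Fin 3)

theorem pd_add (hf : DifferentiableAt ℝ f x) (hg : DifferentiableAt ℝ g x) :
    pd (fun y => f y + g y) i x = pd f i x + pd g i x := by
  simp [pd, fderiv_fun_add hf hg]

theorem pd_sub (hf : DifferentiableAt ℝ f x) (hg : DifferentiableAt ℝ g x) :
    pd (fun y => f y - g y) i x = pd f i x - pd g i x := by
  simp [pd, fderiv_fun_sub hf hg]

theorem pd_mul (hf : DifferentiableAt ℝ f x) (hg : DifferentiableAt ℝ g x) :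
    pd (fun y => f y * g y) i x = pd f i x * g x + f x * pd g i x := by
  simp [pd, fderiv_fun_mul hf hg]
  ring

theorem pd_sq (hf : DifferentiableAt ℝ f x) :
    pd (fun y => f y ^ 2) i x = 2 * f x * pd f i x := by
  simp [pd, fderiv_fun_pow 2 hf]

theorem pd_div_const (hf : DifferentiableAt ℝ f x) (c : ℝ) :
    pd (fun y => f y / c) i x = pd f i x / c := by
  simp only [pd, div_eq_mul_inv, fderiv_mul_const hf]
  simp [mul_comm]

theorem pd_sum {ι : Type*} (s : Finset ι) {f : ι → ℝ³ → ℝ}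
    (hf : ∀ k ∈ s, DifferentiableAt ℝ (f k) x) :
    pd (fun y => ∑ k ∈ s, f k y) i x = ∑ k ∈ s, pd (f k) i x := by
  simp [pd, fderiv_fun_sum hf]

theorem pd_eq_zero_of_notMem_tsupport (h : x ∉ tsupport f) : pd f i x = 0 := by
  simp [pd, fderiv_of_notMem_tsupport (𝕜 := ℝ) h]

theorem contDiff_pd {n : WithTop ℕ∞} (hf : ContDiff ℝ (n + 1) f) : ContDiff ℝ n (pd f i) :=
  (hf.fderiv_right le_rfl).clm_apply contDiff_const

end PartialDerivatives

section Elasticity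

variable {ν lam : ℝ} {u : ℝ³ → ℝ³}

theorem contDiff_strain (hu : ContDiff ℝ 2 u) (i j : Fin 3) : ContDiff ℝ 1 (strain u i j) :=
  ((contDiff_pd i (contDiff_euclidean.1 hu j)).add
    (contDiff_pd j (contDiff_euclidean.1 hu i))).div_const 2

theorem contDiff_stress (hu : ContDiff ℝ 2 u) (i j : Fin 3) :
    ContDiff ℝ 1 (stress ν lam u i j) := by
  refine (contDiff_const.mul (contDiff_strain hu i j)).add ?_
  split_ifs
  · exact contDiff_const.mul (ContDiff.sum fun k _ => contDiff_strain hu k k)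
  · exact contDiff_const

theorem strain_comm (i j : Fin 3) (x : ℝ³) : strain u i j x = strain u j i x := by
  rw [strain, strain, add_comm]

theorem stress_comm (i j : Fin 3) (x : ℝ³) : stress ν lam u i j x = stress ν lam u j i x := by
  simp only [stress, strain_comm i j, eq_comm (a := i)]

theorem strain_eq_zero_of_notMem_tsupport {x : ℝ³} (hx : x ∉ tsupport u) (i j : Fin 3) :
    strain u i j x = 0 := by
  have hk : ∀ k, x ∉ tsupport fun y => u y k := fun k h =>
    hx (tsupport_comp_subset (g := fun v : ℝ³ => v k) rfl u h)
  simp [strain, pd_eq_zero_of_notMem_tsupport _ (hk _)]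

theorem sum_stress_mul_pd_eq_sum_stress_mul_strain (x : ℝ³) :
    ∑ i, ∑ j, stress ν lam u i j x * pd (fun y => u y i) j x =
      ∑ i, ∑ j, stress ν lam u i j x * strain u i j x := by
  have hswap : ∑ i, ∑ j, stress ν lam u i j x * pd (fun y => u y j) i x =
      ∑ i, ∑ j, stress ν lam u i j x * pd (fun y => u y i) j x := by
    rw [Finset.sum_comm]
    simp only [stress_comm (i := _) (j := _) x]
  have hsplit : ∀ i j, stress ν lam u i j x * strain u i j x =
      stress ν lam u i j x * pd (fun y => u y j) i x / 2 +
        stress ν lam u i j x * pd (fun y => u y i) j x / 2 := fun i j => by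
    rw [strain]; ring
  simp only [hsplit, Finset.sum_add_distrib, ← Finset.sum_div, hswap]
  ring

end Elasticity

def energyFlux (ν lam : ℝ) (U : ℝ³ → ℝ³) (p : ℝ³ → ℝ) (u : ℝ³ → ℝ³) (j : Fin 3) (y : ℝ³) : ℝ :=
  U y j * ((p y ^ 2 + ∑ k, u y k ^ 2) / 2) + p y * u y j - ∑ i, u y i * stress ν lam u i j y

section EnergyFlux

variable {ν lam : ℝ} {U u : ℝ³ → ℝ³} {p : ℝ³ → ℝ}

theorem pd_energyFlux {x : ℝ³} (hU : DifferentiableAt ℝ U x) (hp : DifferentiableAt ℝ p x)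
    (hu : ContDiff ℝ 2 u) (j : Fin 3) :
    pd (energyFlux ν lam U p u j) j x =
      pd (fun y => U y j) j x * ((p x ^ 2 + ∑ k, u x k ^ 2) / 2)
        + U x j * ((2 * p x * pd p j x + ∑ k, 2 * u x k * pd (fun y => u y k) j x) / 2)
        + (pd p j x * u x j + p x * pd (fun y => u y j) j x)
        - ∑ i, (pd (fun y => u y i) j x * stress ν lam u i j x
            + u x i * pd (stress ν lam u i j) j x) := by
  have hUj := differentiableAt_euclidean.1 hU j
  have hui : ∀ i, DifferentiableAt ℝ (fun y => u y i) x := fun i =>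
    differentiableAt_euclidean.1 (hu.differentiable two_ne_zero x) i
  have hσ : ∀ i, DifferentiableAt ℝ (stress ν lam u i j) x := fun i =>
    (contDiff_stress hu i j).differentiable one_ne_zero x
  unfold energyFlux
  rw [pd_sub, pd_add, pd_mul, pd_mul, pd_div_const, pd_add, pd_sq, pd_sum, pd_sum]
  · rw [Finset.sum_congr rfl fun k (_ : k ∈ Finset.univ) => pd_sq j (hui k),
      Finset.sum_congr rfl fun i (_ : i ∈ Finset.univ) => pd_mul j (hui i) (hσ i)]
  all_goals
    try intro k _
    fun_prop

theorem energy_density_identity {η : ℝ} {x : ℝ³} (hU : DifferentiableAt ℝ U x)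
    (hp : DifferentiableAt ℝ p x) (hu : ContDiff ℝ 2 u) {pt : ℝ} {ut : Fin 3 → ℝ}
    (hpt : pt + ∑ i, U x i * pd p i x + divg u x = 0)
    (hut : ∀ i, ut i + ∑ j, U x j * pd (fun y => u y i) j x - divStress ν lam u i x
      + η * u x i + pd p i x = 0) :
    p x * pt + ∑ i, u x i * ut i =
      -(∑ i, ∑ j, stress ν lam u i j x * strain u i j x) - η * ∑ i, u x i ^ 2
        + divg U x * (p x ^ 2 + ∑ i, u x i ^ 2) / 2 - ∑ j, pd (energyFlux ν lam U p u j) j x := by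
  rw [Finset.sum_congr rfl fun j (_ : j ∈ Finset.univ) => pd_energyFlux hU hp hu j,
    ← sum_stress_mul_pd_eq_sum_stress_mul_strain]
  simp only [divg, divStress, Fin.sum_univ_three] at hpt hut ⊢
  linear_combination p x * hpt + u x 0 * hut 0 + u x 1 * hut 1 + u x 2 * hut 2

theorem contDiff_energyFlux (hU : ContDiff ℝ 1 U) (hp : ContDiff ℝ 1 p) (hu : ContDiff ℝ 2 u)
    (j : Fin 3) : ContDiff ℝ 1 (energyFlux ν lam U p u j) := by
  have hui : ∀ i, ContDiff ℝ 1 (fun y => u y i) := contDiff_euclidean.1 (hu.of_le one_le_two)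
  have hσ : ∀ i, ContDiff ℝ 1 (stress ν lam u i j) := fun i => contDiff_stress hu i j
  have hUj : ContDiff ℝ 1 (fun y => U y j) := contDiff_euclidean.1 hU j
  unfold energyFlux
  fun_prop

theorem energyFlux_eq_zero {x : ℝ³} (hpx : p x = 0) (hux : u x = 0) (j : Fin 3) :
    energyFlux ν lam U p u j x = 0 := by
  simp [energyFlux, hpx, hux]

end EnergyFlux

theorem integrable_pd {f : ℝ³ → ℝ} (hf : ContDiff ℝ 1 f) (hsupp : HasCompactSupport f)
    (i : Fin 3) : Integrable (pd f i) :=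
  ((hf.continuous_fderiv one_ne_zero).clm_apply continuous_const).integrable_of_hasCompactSupport
    (hsupp.fderiv_apply (𝕜 := ℝ) _)

theorem integral_pd_eq_zero {f : ℝ³ → ℝ} (hf : ContDiff ℝ 1 f) (hsupp : HasCompactSupport f)
    (i : Fin 3) : ∫ x, pd f i x = 0 :=
  hsupp.integral_fderiv_apply_eq_zero hf _

theorem integral_energy_identity {ν lam η : ℝ} {U u : ℝ³ → ℝ³} {p : ℝ³ → ℝ}
    (hU : ContDiff ℝ 1 U) (hp : ContDiff ℝ 1 p) (hu : ContDiff ℝ 2 u)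
    (hpc : HasCompactSupport p) (huc : HasCompactSupport u) {pt : ℝ³ → ℝ} {ut : ℝ³ → Fin 3 → ℝ}
    (hpt : ∀ x, pt x + ∑ i, U x i * pd p i x + divg u x = 0)
    (hut : ∀ x i, ut x i + ∑ j, U x j * pd (fun y => u y i) j x - divStress ν lam u i x
      + η * u x i + pd p i x = 0) :
    ∫ x, (p x * pt x + ∑ i, u x i * ut x i) =
      -(∫ x, ∑ i, ∑ j, stress ν lam u i j x * strain u i j x) - η * (∫ x, ∑ i, u x i ^ 2)
        + (1 / 2) * ∫ x, divg U x * (p x ^ 2 + ∑ i, u x i ^ 2) := by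
  set K := tsupport p ∪ tsupport u
  have hK : IsCompact K := hpc.union huc
  have hpK : ∀ x ∉ K, p x = 0 := fun x hx => image_eq_zero_of_notMem_tsupport fun h => hx (.inl h)
  have huK : ∀ x ∉ K, u x = 0 := fun x hx => image_eq_zero_of_notMem_tsupport fun h => hx (.inr h)
  have hεK : ∀ x ∉ K, ∀ i j, strain u i j x = 0 := fun x hx =>
    strain_eq_zero_of_notMem_tsupport fun h => hx (.inr h)
  have hint : ∀ f : ℝ³ → ℝ, Continuous f → (∀ x ∉ K, f x = 0) → Integrable f := fun f hf hfK =>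
    hf.integrable_of_hasCompactSupport (.intro hK hfK)
  have hui : ∀ i, Continuous fun y => u y i := fun i => (contDiff_euclidean.1 hu i).continuous
  have hG : ∀ j, ContDiff ℝ 1 (energyFlux ν lam U p u j) := contDiff_energyFlux hU hp hu
  have hGc : ∀ j, HasCompactSupport (energyFlux ν lam U p u j) := fun j =>
    .intro hK fun x hx => energyFlux_eq_zero (hpK x hx) (huK x hx) j
  have hσε : Integrable fun x => ∑ i, ∑ j, stress ν lam u i j x * strain u i j x := by
    refine hint _ ?_ fun x hx => by simp [hεK x hx]
    have hσ := fun i j => (contDiff_stress (ν := ν) (lam := lam) hu i j).continuous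
    have hε := fun i j => (contDiff_strain hu i j).continuous
    fun_prop
  have hu2 : Integrable fun x => ∑ i, u x i ^ 2 :=
    hint _ (by fun_prop) fun x hx => by simp [huK x hx]
  have hdivU : Integrable fun x => divg U x * (p x ^ 2 + ∑ i, u x i ^ 2) := by
    refine hint _ ?_ fun x hx => by simp [hpK x hx, huK x hx]
    have hdU := fun i : Fin 3 => (contDiff_pd (n := 0) i (contDiff_euclidean.1 hU i)).continuous
    have hpcont := hp.continuous
    unfold divg
    fun_prop
  calc ∫ x, (p x * pt x + ∑ i, u x i * ut x i)
      = ∫ x, ((-(∑ i, ∑ j, stress ν lam u i j x * strain u i j x) - η * ∑ i, u x i ^ 2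
          + (1 / 2) * (divg U x * (p x ^ 2 + ∑ i, u x i ^ 2)))
          - ∑ j, pd (energyFlux ν lam U p u j) j x) := by
        congr 1
        ext x
        rw [energy_density_identity (hU.differentiable one_ne_zero x)
          (hp.differentiable one_ne_zero x) hu (hpt x) (hut x)]
        ring
    _ = _ := by
        have hdG := fun j => integrable_pd (hG j) (hGc j) j
        rw [integral_sub (by fun_prop) (integrable_finsetSum _ fun j _ => hdG j),
          integral_finsetSum _ fun j _ => hdG j]
        simp only [integral_pd_eq_zero (hG _) (hGc _), Finset.sum_const_zero, sub_zero]
        rw [integral_add (by fun_prop) (by fun_prop), integral_sub (by fun_prop) (by fun_prop),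
          integral_neg, integral_const_mul, integral_const_mul]

theorem energy_balance_differential_general
    (ν lam η T : ℝ)
    (U : EuclideanSpace ℝ (Fin 3) → EuclideanSpace ℝ (Fin 3)) (hU : ContDiff ℝ 1 U)
    (p : ℝ → EuclideanSpace ℝ (Fin 3) → ℝ)
    (u : ℝ → EuclideanSpace ℝ (Fin 3) → EuclideanSpace ℝ (Fin 3))
    (hp : ContDiffOn ℝ 1 (fun q : ℝ × EuclideanSpace ℝ (Fin 3) => p q.1 q.2)
      (Set.Ioo 0 T ×ˢ Set.univ))
    (hu : ContDiffOn ℝ 1 (fun q : ℝ × EuclideanSpace ℝ (Fin 3) => u q.1 q.2)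
      (Set.Ioo 0 T ×ˢ Set.univ))
    (hu2 : ∀ t ∈ Set.Ioo (0 : ℝ) T, ContDiff ℝ 2 (u t))
    (K : Set (EuclideanSpace ℝ (Fin 3))) (hK : IsCompact K)
    (hsupp : ∀ t ∈ Set.Ioo (0 : ℝ) T, tsupport (p t) ⊆ K ∧ tsupport (u t) ⊆ K)
    (hpde1 : ∀ t ∈ Set.Ioo (0 : ℝ) T, ∀ x,
      deriv (fun s => p s x) t + (∑ i, U x i * pd (p t) i x) + divg (u t) x = 0)
    (hpde2 : ∀ t ∈ Set.Ioo (0 : ℝ) T, ∀ x, ∀ i : Fin 3,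
      deriv (fun s => u s x i) t + (∑ j, U x j * pd (fun y => u t y i) j x)
        - divStress ν lam (u t) i x + η * u t x i + pd (p t) i x = 0) :
    ∀ t ∈ Set.Ioo (0 : ℝ) T,
      HasDerivAt (fun s => (1 / 2) * ∫ x, ((p s x) ^ 2 + ∑ i, (u s x i) ^ 2))
        (-(∫ x, ∑ i, ∑ j, stress ν lam (u t) i j x * strain (u t) i j x)
          - η * (∫ x, ∑ i, (u t x i) ^ 2)
          + (1 / 2) * ∫ x, divg U x * ((p t x) ^ 2 + ∑ i, (u t x i) ^ 2)) t := by
  intro t ht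
  have hui := contDiffOn_euclidean.1 hu
  have hE : ContDiffOn ℝ 1 (fun q : ℝ × ℝ³ => p q.1 q.2 ^ 2 + ∑ i, u q.1 q.2 i ^ 2)
      (Ioo 0 T ×ˢ univ) := by
    fun_prop
  have hEK : ∀ s ∈ Ioo 0 T, ∀ x ∉ K, p s x ^ 2 + ∑ i, u s x i ^ 2 = 0 := fun s hs x hx => by
    simp [image_eq_zero_of_notMem_tsupport fun h => hx ((hsupp s hs).1 h),
      image_eq_zero_of_notMem_tsupport fun h => hx ((hsupp s hs).2 h)]
  have hdt : ∀ x, deriv (fun s => p s x ^ 2 + ∑ i, u s x i ^ 2) t =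
      2 * (p t x * deriv (fun s => p s x) t + ∑ i, u t x i * deriv (fun s => u s x i) t) := by
    intro x
    have hpt := (hp.hasDerivAt_slice isOpen_Ioo one_ne_zero ht x).differentiableAt.hasDerivAt
    have hut (i : Fin 3) := ((hui i).hasDerivAt_slice (f := fun s x => u s x i) isOpen_Ioo
      one_ne_zero ht x).differentiableAt.hasDerivAt
    rw [((hpt.fun_pow 2).fun_add (HasDerivAt.fun_sum fun i _ => (hut i).fun_pow 2)).deriv]
    simp only [Nat.cast_ofNat, Nat.add_one_sub_one, pow_one, mul_add, Finset.mul_sum, mul_assoc]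
  refine ((hasDerivAt_integral_of_contDiffOn isOpen_Ioo hE hK hEK ht).const_mul
    (1 / 2)).congr_deriv ?_
  rw [← integral_energy_identity hU (hp.contDiff_slice isOpen_Ioo ht) (hu2 t ht)
    (hK.of_isClosed_subset (isClosed_tsupport _) (hsupp t ht).1)
    (hK.of_isClosed_subset (isClosed_tsupport _) (hsupp t ht).2) (hpde1 t ht) (hpde2 t ht)]
  simp only [hdt, integral_const_mul]
  ring

/-- differential form of the energy balance for the linearized
compressible Navier–Stokes (Oseen) system
`∂ₜp + U·∇p + div u = 0`, `∂ₜu + U·∇u − div σ(u) + ηu + ∇p = 0`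
with compactly supported smooth data: the energy
`E(t) = ½∫ (p² + |u|²)` is differentiable on `(0,T)` with
`E'(t) = −∫ σ(u):ε(u) − η∫|u|² + ½∫ (div U)(p² + |u|²)`. -/
theorem energy_balance_differential
    (ν lam η T : ℝ) (hν : 0 < ν) (hlam : 0 ≤ lam) (hη : 0 < η) (hT : 0 < T)
    (U : EuclideanSpace ℝ (Fin 3) → EuclideanSpace ℝ (Fin 3)) (hU : ContDiff ℝ 1 U)
    (p : ℝ → EuclideanSpace ℝ (Fin 3) → ℝ)
    (u : ℝ → EuclideanSpace ℝ (Fin 3) → EuclideanSpace ℝ (Fin 3))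
    (hp : ContDiffOn ℝ 1 (fun q : ℝ × EuclideanSpace ℝ (Fin 3) => p q.1 q.2)
      (Set.Ioo 0 T ×ˢ Set.univ))
    (hu : ContDiffOn ℝ 1 (fun q : ℝ × EuclideanSpace ℝ (Fin 3) => u q.1 q.2)
      (Set.Ioo 0 T ×ˢ Set.univ))
    (hu2 : ∀ t ∈ Set.Ioo (0 : ℝ) T, ContDiff ℝ 2 (u t))
    (hu2c : ContinuousOn
      (fun q : ℝ × EuclideanSpace ℝ (Fin 3) => fderiv ℝ (fderiv ℝ (u q.1)) q.2)
      (Set.Ioo 0 T ×ˢ Set.univ))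
    (K : Set (EuclideanSpace ℝ (Fin 3))) (hK : IsCompact K)
    (hsupp : ∀ t ∈ Set.Ioo (0 : ℝ) T, tsupport (p t) ⊆ K ∧ tsupport (u t) ⊆ K)
    (hpde1 : ∀ t ∈ Set.Ioo (0 : ℝ) T, ∀ x,
      deriv (fun s => p s x) t + (∑ i, U x i * pd (p t) i x) + divg (u t) x = 0)
    (hpde2 : ∀ t ∈ Set.Ioo (0 : ℝ) T, ∀ x, ∀ i : Fin 3,
      deriv (fun s => u s x i) t + (∑ j, U x j * pd (fun y => u t y i) j x)
        - divStress ν lam (u t) i x + η * u t x i + pd (p t) i x = 0) :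
    ∀ t ∈ Set.Ioo (0 : ℝ) T,
      HasDerivAt (fun s => (1 / 2) * ∫ x, ((p s x) ^ 2 + ∑ i, (u s x i) ^ 2))
        (-(∫ x, ∑ i, ∑ j, stress ν lam (u t) i j x * strain (u t) i j x)
          - η * (∫ x, ∑ i, (u t x i) ^ 2)
          + (1 / 2) * ∫ x, divg U x * ((p t x) ^ 2 + ∑ i, (u t x i) ^ 2)) t :=
  energy_balance_differential_general ν lam η T U hU p u hp hu hu2 K hK hsupp hpde1 hpde2

end
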